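/- arXiv:1612.09141 — 4 statements merged into one kernel-verified Lean document; each statement's English description precedes it below -/
import Mathlib

section
/- Let k be a field and consider the 3-Kronecker representation X with X₁ = k², X₂ = k², and the three structure maps α(a,b) = (a,b), β(a,b) = (b,0), γ(a,b) = (0,a). Then for every nonzero vector m ∈ X₁, the subspace of X₂ spanned by α(m), β(m), γ(m) is all of X₂ = k². -/
/-- For the representation X(α,β,γ) with α = id, β(a,b) = (b,0), γ(a,b) = (0,a),
every nonzero m ∈ k² has α(m), β(m), γ(m) spanning all of k². -/
theorem X_generates (k : Type*) [Field k] (m : k × k) (hm : m ≠ 0) :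
    Submodule.span k ({m, (m.2, 0), (0, m.1)} : Set (k × k)) = ⊤ := by
  obtain ⟨a, b⟩ := m
  simp only [Prod.mk.injEq] at *
  have hmem : (a, b) ∈ Submodule.span k ({(a, b), (b, 0), (0, a)} : Set (k × k)) :=
    Submodule.subset_span (by simp)
  have hb0 : ((b, 0) : k × k) ∈ Submodule.span k ({(a, b), (b, 0), (0, a)} : Set (k × k)) :=
    Submodule.subset_span (by simp)
  have h0a : ((0, a) : k × k) ∈ Submodule.span k ({(a, b), (b, 0), (0, a)} : Set (k × k)) :=
    Submodule.subset_span (by simp)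
  rw [eq_top_iff]
  rintro ⟨x, y⟩ -
  by_cases ha : a = 0
  · have hb : b ≠ 0 := by
      intro h; exact hm (by simp [ha, h, Prod.ext_iff])
    have hx : ((x, 0) : k × k) = (x / b) • ((b, 0) : k × k) := by
      simp [Prod.ext_iff, div_mul_cancel₀, hb]
    have hy : ((0, y) : k × k) = (y / b) • ((a, b) : k × k) := by
      simp [Prod.ext_iff, div_mul_cancel₀, hb, ha]
    have : ((x, y) : k × k) = ((x, 0) : k × k) + ((0, y) : k × k) := by simp
    rw [this, hx, hy]
    exact Submodule.add_mem _ (Submodule.smul_mem _ _ hb0) (Submodule.smul_mem _ _ hmem)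
  · have hy : ((0, y) : k × k) = (y / a) • ((0, a) : k × k) := by
      simp [Prod.ext_iff, div_mul_cancel₀, ha]
    have ha0 : ((a, 0) : k × k) ∈ Submodule.span k ({(a, b), (b, 0), (0, a)} : Set (k × k)) := by
      have : ((a, 0) : k × k) = (a, b) - (b / a) • ((0, a) : k × k) := by
        simp [Prod.ext_iff, div_mul_cancel₀, ha]
      rw [this]
      exact Submodule.sub_mem _ hmem (Submodule.smul_mem _ _ h0a)
    have hx : ((x, 0) : k × k) = (x / a) • ((a, 0) : k × k) := by
      simp [Prod.ext_iff, div_mul_cancel₀, ha]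
    have : ((x, y) : k × k) = ((x, 0) : k × k) + ((0, y) : k × k) := by simp
    rw [this, hx, hy]
    exact Submodule.add_mem _ (Submodule.smul_mem _ _ ha0) (Submodule.smul_mem _ _ h0a)
end

section
/- Let k be a field and X the 3-Kronecker representation on k², k² with maps α = id, β(a,b) = (b,0), γ(a,b) = (0,a). Then X has no subrepresentation U with dim U₁ = 1 and dim U₂ = 1; that is, there is no 1-dimensional subspace U₁ ⊆ k² and 1-dimensional subspace U₂ ⊆ k² with α(U₁) ⊆ U₂, β(U₁) ⊆ U₂, and γ(U₁) ⊆ U₂. -/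
/-- In a 1-dimensional submodule of `k × k`, any two elements are proportional. -/
lemma dep_of_finrank_one {k : Type*} [Field k] (U : Submodule k (k × k))
    (h : Module.finrank k U = 1) {u v : k × k} (hu : u ∈ U) (hv : v ∈ U) :
    u.1 * v.2 = u.2 * v.1 := by
  obtain ⟨g, -, hg⟩ := finrank_eq_one_iff'.mp h
  obtain ⟨c, hc⟩ := hg ⟨u, hu⟩
  obtain ⟨d, hd⟩ := hg ⟨v, hv⟩
  have hc' : c • (g : k × k) = u := congrArg Subtype.val hc
  have hd' : d • (g : k × k) = v := congrArg Subtype.val hd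
  subst hc' hd'
  simp [Prod.smul_def, smul_eq_mul]
  ring

/-- The representation X(α,β,γ) (with α = id, β(a,b) = (b,0), γ(a,b) = (0,a))
has no subrepresentation with dimension vector (1,1). -/
theorem X_no_bristle_sub (k : Type*) [Field k] :
    ¬ ∃ (U₁ U₂ : Submodule k (k × k)),
      Module.finrank k U₁ = 1 ∧ Module.finrank k U₂ = 1 ∧
      (∀ u ∈ U₁, u ∈ U₂) ∧
      (∀ u : k × k, u ∈ U₁ → ((u.2, 0) : k × k) ∈ U₂) ∧
      (∀ u : k × k, u ∈ U₁ → ((0, u.1) : k × k) ∈ U₂) := by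
  rintro ⟨U₁, U₂, h1, h2, hα, hβ, hγ⟩
  obtain ⟨⟨u, hu⟩, hune, -⟩ := finrank_eq_one_iff'.mp h1
  have hune' : u ≠ 0 := fun h => hune (Subtype.ext h)
  have huU₂ := hα u hu
  have hβ' := hβ u hu
  have hγ' := hγ u hu
  have d1 : u.1 * u.1 = u.2 * 0 := dep_of_finrank_one U₂ h2 huU₂ hγ'
  have d2 : u.1 * 0 = u.2 * u.2 := dep_of_finrank_one U₂ h2 huU₂ hβ'
  have ha : u.1 = 0 := by
    have : u.1 * u.1 = 0 := by simpa using d1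
    exact mul_self_eq_zero.mp this
  have hb : u.2 = 0 := by
    have : u.2 * u.2 = 0 := by simpa using d2.symm
    exact mul_self_eq_zero.mp this
  exact hune' (Prod.ext ha hb)
end

section
/- Every pair (x,y) of positive integers with x² + y² − 3xy < 0 can be mapped into the set F = {(x,y) : 2x ≤ 3y and y ≤ x} by a finite composition of the maps σ(x,y) = (3x−y,x), σ⁻¹(x,y) = (y, 3y−x), and δ(x,y) = (y,x). -/
def sigmaK : ℤ × ℤ → ℤ × ℤ := fun p => (3*p.1 - p.2, p.1)
def sigmaKinv : ℤ × ℤ → ℤ × ℤ := fun p => (p.2, 3*p.2 - p.1)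
def deltaK : ℤ × ℤ → ℤ × ℤ := fun p => (p.2, p.1)

theorem reach_aux : ∀ n : ℕ, ∀ x y : ℤ, x + y ≤ n → 0 < x → 0 < y →
    x^2 + y^2 - 3*x*y < 0 →
    ∃ l : List (ℤ × ℤ → ℤ × ℤ),
      (∀ f ∈ l, f = sigmaK ∨ f = sigmaKinv ∨ f = deltaK) ∧
      (2 * (l.foldl (fun p f => f p) (x, y)).1 ≤ 3 * (l.foldl (fun p f => f p) (x, y)).2 ∧
       (l.foldl (fun p f => f p) (x, y)).2 ≤ (l.foldl (fun p f => f p) (x, y)).1) := by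
  intro n
  induction n with
  | zero => intro x y hn hx hy _; omega
  | succ n ih =>
    intro x y hn hx hy hreg
    by_cases hyx : y ≤ x
    · by_cases h2 : 2*x ≤ 3*y
      · exact ⟨[], by simp, by simpa using ⟨h2, hyx⟩⟩
      · have h3 : x < 3*y := by nlinarith
        have hq : y^2 + (3*y - x)^2 - 3*y*(3*y - x) = x^2 + y^2 - 3*x*y := by ring
        obtain ⟨l, hl, hg⟩ := ih y (3*y - x) (by omega) hy (by omega) (by rw [hq]; exact hreg)
        refine ⟨sigmaKinv :: l, ?_, ?_⟩
        · intro f hf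
          rcases List.mem_cons.mp hf with h | h
          · exact Or.inr (Or.inl h)
          · exact hl f h
        · simpa [sigmaKinv] using hg
    · by_cases h2 : 2*y ≤ 3*x
      · exact ⟨[deltaK], by simp, by simp [deltaK]; omega⟩
      · have h3 : y < 3*x := by nlinarith
        have hq : x^2 + (3*x - y)^2 - 3*x*(3*x - y) = x^2 + y^2 - 3*x*y := by ring
        obtain ⟨l, hl, hg⟩ := ih x (3*x - y) (by omega) hx (by omega) (by rw [hq]; exact hreg)
        refine ⟨deltaK :: sigmaKinv :: l, ?_, ?_⟩
        · intro f hf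
          rcases List.mem_cons.mp hf with h | h
          · exact Or.inr (Or.inr h)
          · rcases List.mem_cons.mp h with h' | h'
            · exact Or.inr (Or.inl h')
            · exact hl f h'
        · simpa [deltaK, sigmaKinv] using hg

/-- Every regular dimension vector can be moved into the fundamental domain
F = {(x,y) : 2x ≤ 3y ∧ y ≤ x} by a finite composition of σ, σ⁻¹ and δ. -/
theorem reach_fundamental_domain (x y : ℤ) (hx : 0 < x) (hy : 0 < y)
    (hreg : x^2 + y^2 - 3*x*y < 0) :
    ∃ l : List (ℤ × ℤ → ℤ × ℤ),
      (∀ f ∈ l, f = sigmaK ∨ f = sigmaKinv ∨ f = deltaK) ∧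
      (2 * (l.foldl (fun p f => f p) (x, y)).1 ≤ 3 * (l.foldl (fun p f => f p) (x, y)).2 ∧
       (l.foldl (fun p f => f p) (x, y)).2 ≤ (l.foldl (fun p f => f p) (x, y)).1) :=
  reach_aux (x + y).toNat x y (by omega) hx hy hreg
end

section
/- Let k be a field. Define the 3-Kronecker representation Y with Y₁ = k⁴ (basis e₁,e₂,e₃,e₄ for the four top vertices, left to right) and Y₂ = k² (basis f₁,f₂), with maps: α(e₂) = f₁, α(e₃) = f₂, α(e₁) = α(e₄) = 0; β(e₃) = f₁, β(e₄) = f₂, β(e₁) = β(e₂) = 0; γ(e₁) = f₁, γ(e₂) = f₂, γ(e₃) = γ(e₄) = 0. Then the subspaces U₁ = span(e₂,e₃) ⊆ Y₁ and U₂ = Y₂ form a subrepresentation of Y isomorphic to X (where X has maps id, (a,b)↦(b,0), (a,b)↦(0,a)), and the quotient Y/U has dimension vector (2,0). -/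
open Module

/-- The structure maps of Y(α,β,γ): α(e₂)=f₁, α(e₃)=f₂; β(e₃)=f₁, β(e₄)=f₂;
γ(e₁)=f₁, γ(e₂)=f₂ (zero on the remaining basis vectors). -/
def alphaY (k : Type*) [Field k] : (Fin 4 → k) →ₗ[k] k × k where
  toFun v := (v 1, v 2)
  map_add' _ _ := rfl
  map_smul' _ _ := rfl

def betaY (k : Type*) [Field k] : (Fin 4 → k) →ₗ[k] k × k where
  toFun v := (v 2, v 3)
  map_add' _ _ := rfl
  map_smul' _ _ := rfl

def gammaY (k : Type*) [Field k] : (Fin 4 → k) →ₗ[k] k × k where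
  toFun v := (v 0, v 1)
  map_add' _ _ := rfl
  map_smul' _ _ := rfl

section Aux
variable (k : Type*) [Field k]

/-- projection to coordinates 0 and 3 -/
def projY : (Fin 4 → k) →ₗ[k] k × k where
  toFun v := (v 0, v 3)
  map_add' _ _ := rfl
  map_smul' _ _ := rfl

lemma U1_eq_ker :
    Submodule.span k {Pi.single 1 1, Pi.single 2 1} = LinearMap.ker (projY k) := by
  apply le_antisymm
  · rw [Submodule.span_le]
    rintro v (rfl | rfl) <;> simp [projY, LinearMap.mem_ker, Prod.ext_iff, Pi.single_apply]
  · intro v hv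
    simp only [LinearMap.mem_ker, projY, LinearMap.coe_mk, AddHom.coe_mk, Prod.ext_iff] at hv
    have : v = v 1 • (Pi.single 1 1 : Fin 4 → k) + v 2 • (Pi.single 2 1 : Fin 4 → k) := by
      funext i
      fin_cases i <;> simp [Pi.single_apply, hv.1, hv.2]
    rw [this]
    exact Submodule.add_mem _ (Submodule.smul_mem _ _ (Submodule.subset_span (Or.inl rfl)))
      (Submodule.smul_mem _ _ (Submodule.subset_span (Or.inr rfl)))

lemma mem_U1 (v : Fin 4 → k)
    (hv : v ∈ Submodule.span k {Pi.single 1 1, Pi.single 2 1}) : v 0 = 0 ∧ v 3 = 0 := by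
  rw [U1_eq_ker] at hv
  simpa [projY, LinearMap.mem_ker, Prod.ext_iff] using hv

end Aux

/-- The subspaces U₁ = span(e₂,e₃), U₂ = k² form a subrepresentation of Y which is
isomorphic to X (with maps id, (a,b) ↦ (b,0), (a,b) ↦ (0,a)), and the quotient
has dimension vector (2,0). -/
theorem Y_contains_X (k : Type*) [Field k] :
    let U₁ : Submodule k (Fin 4 → k) :=
      Submodule.span k {Pi.single 1 1, Pi.single 2 1}
    let U₂ : Submodule k (k × k) := ⊤
    (∀ v ∈ U₁, alphaY k v ∈ U₂ ∧ betaY k v ∈ U₂ ∧ gammaY k v ∈ U₂) ∧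
    (∃ φ : U₁ ≃ₗ[k] k × k,
      (∀ v : U₁, alphaY k (v : Fin 4 → k) = φ v) ∧
      (∀ v : U₁, betaY k (v : Fin 4 → k) = ((φ v).2, 0)) ∧
      (∀ v : U₁, gammaY k (v : Fin 4 → k) = (0, (φ v).1))) ∧
    finrank k ((Fin 4 → k) ⧸ U₁) = 2 ∧ finrank k ((k × k) ⧸ U₂) = 0 := by
  intro U₁ U₂
  have hφ : Function.Bijective ((alphaY k).comp U₁.subtype) := by
    constructor
    · rw [← LinearMap.ker_eq_bot, LinearMap.ker_eq_bot']
      rintro ⟨v, hv⟩ h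
      obtain ⟨h0, h3⟩ := mem_U1 k v hv
      simp only [LinearMap.comp_apply, Submodule.subtype_apply, alphaY, LinearMap.coe_mk,
        AddHom.coe_mk, Prod.ext_iff, Prod.fst_zero, Prod.snd_zero] at h
      ext i
      fin_cases i <;> simp [h0, h3, h.1, h.2]
    · rintro ⟨a, b⟩
      refine ⟨⟨a • (Pi.single 1 1 : Fin 4 → k) + b • (Pi.single 2 1 : Fin 4 → k), Submodule.add_mem _
        (Submodule.smul_mem _ _ (Submodule.subset_span (Or.inl rfl)))
        (Submodule.smul_mem _ _ (Submodule.subset_span (Or.inr rfl)))⟩, ?_⟩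
      simp [alphaY, Pi.single_apply]
  set φ : U₁ ≃ₗ[k] k × k := LinearEquiv.ofBijective _ hφ with hφdef
  have hφv : ∀ v : U₁, φ v = ((v : Fin 4 → k) 1, (v : Fin 4 → k) 2) := fun v => rfl
  refine ⟨fun v _ => ⟨trivial, trivial, trivial⟩, ⟨φ, ?_, ?_, ?_⟩, ?_, ?_⟩
  · intro v; rfl
  · intro v
    have := (mem_U1 k v.1 v.2).2
    simp [hφv, betaY, this]
  · intro v
    have := (mem_U1 k v.1 v.2).1
    simp [hφv, gammaY, this]
  · have h1 : finrank k U₁ = 2 := by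
      rw [φ.finrank_eq]; simp
    have := Submodule.finrank_quotient_add_finrank U₁
    rw [h1] at this
    have h4 : finrank k (Fin 4 → k) = 4 := by simp
    omega
  · have : Subsingleton ((k × k) ⧸ U₂) :=
      Submodule.Quotient.subsingleton_iff.mpr rfl
    exact finrank_zero_of_subsingleton
end
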